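/- Let f(x) = |x|²/4 on ℝⁿ. For every smooth function u : ℝⁿ → ℝ one has −𝒫(∇u) = ∇(ℒu) + (1/2)·∇u pointwise. For every smooth vector field V : ℝⁿ → ℝⁿ with div_f V = 0 one has −2·𝒫V = ℒV + (1/2)·V pointwise, and moreover div_f(ℒV) = 0 and div_f(𝒫V) = 0. -/

import Mathlib

open MeasureTheory Real

noncomputable section

/-- Euclidean space `ℝⁿ`. -/
abbrev En (n : ℕ) := EuclideanSpace ℝ (Fin n)

variable {n : ℕ}

/-- Partial derivative `∂_i u` in the `i`-th coordinate direction. -/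
def pd (i : Fin n) (u : En n → ℝ) (x : En n) : ℝ :=
  fderiv ℝ u x (EuclideanSpace.single i 1)

/-- Euclidean Laplacian `Δu = Σ_i ∂_i∂_i u`. -/
def lap (u : En n → ℝ) (x : En n) : ℝ := ∑ i, pd i (pd i u) x

/-- The drift Laplacian `ℒu = Δu − ⟨x/2, ∇u⟩` for the potential `f(x) = |x|²/4`. -/
def driftLap (u : En n → ℝ) (x : En n) : ℝ :=
  lap u x - ∑ i, (x i / 2) * pd i u x

/-- The drift Laplacian acting componentwise on vector fields. -/
def driftLapV (Y : En n → Fin n → ℝ) (x : En n) (i : Fin n) : ℝ :=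
  driftLap (fun y => Y y i) x

/-- The gradient `∇u` as a vector field. -/
def gradV (u : En n → ℝ) (x : En n) (i : Fin n) : ℝ := pd i u x

/-- The weighted divergence `div_f Y = div Y − ⟨Y, x/2⟩` for `f(x) = |x|²/4`. -/
def divf (Y : En n → Fin n → ℝ) (x : En n) : ℝ :=
  ∑ i, (pd i (fun y => Y y i) x - Y x i * (x i / 2))

/-- `div_f* Y`, the symmetric 2-tensor `(div_f* Y)_{ij} = −(∂_i Y_j + ∂_j Y_i)/2`. -/
def divfStar (Y : En n → Fin n → ℝ) (x : En n) (i j : Fin n) : ℝ :=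
  -(pd i (fun y => Y y j) x + pd j (fun y => Y y i) x) / 2

/-- The weighted divergence of a matrix-valued map:
`(div_f h)_i = Σ_j (∂_j h_{ij} − (x_j/2) h_{ij})`. -/
def divfT (h : En n → Fin n → Fin n → ℝ) (x : En n) (i : Fin n) : ℝ :=
  ∑ j, (pd j (fun y => h y i j) x - (x j / 2) * h x i j)

/-- The operator `𝒫 = div_f ∘ div_f*` on vector fields. -/
def Pop (Y : En n → Fin n → ℝ) : En n → Fin n → ℝ := divfT (divfStar Y)

/-- The Hessian matrix `(Hess u)_{ij} = ∂_i ∂_j u`. -/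
def hess (u : En n → ℝ) (x : En n) (i j : Fin n) : ℝ := pd i (pd j u) x

/-- The Gaussian weight `e^{-f(x)} = e^{-|x|²/4}`. -/
def gw (x : En n) : ℝ := Real.exp (-(‖x‖ ^ 2 / 4))

/-! ### Auxiliary calculus lemmas -/

lemma pd_contDiff {u : En n → ℝ} (hu : ContDiff ℝ (⊤ : ℕ∞) u) (i : Fin n) :
    ContDiff ℝ (⊤ : ℕ∞) (pd i u) := by
  exact (hu.fderiv_right (by simp)).clm_apply contDiff_const

lemma cdiff {w : En n → ℝ} {x : En n} (hw : ContDiff ℝ (⊤ : ℕ∞) w) : DifferentiableAt ℝ w x :=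
  (hw.differentiable (by simp)).differentiableAt

lemma pd_eq_snd {u : En n → ℝ} (hu : ContDiff ℝ (⊤ : ℕ∞) u) (i j : Fin n) (x : En n) :
    pd i (pd j u) x = fderiv ℝ (fderiv ℝ u) x (EuclideanSpace.single i 1)
      (EuclideanSpace.single j 1) := by
  have h2 : HasFDerivAt (fderiv ℝ u) (fderiv ℝ (fderiv ℝ u) x) x :=
    (((hu.fderiv_right (m := 1) (WithTop.coe_le_coe.mpr le_top)).differentiable (by simp)) x).hasFDerivAt
  have hc := ((ContinuousLinearMap.apply ℝ ℝ (EuclideanSpace.single j 1)).hasFDerivAt).comp x h2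
  have heq : (⇑(ContinuousLinearMap.apply ℝ ℝ (EuclideanSpace.single j 1)) ∘ fderiv ℝ u)
      = fun y => fderiv ℝ u y (EuclideanSpace.single j 1) := rfl
  rw [heq] at hc
  have : pd j u = fun y => fderiv ℝ u y (EuclideanSpace.single j 1) := rfl
  rw [pd, this, hc.fderiv]
  rfl

lemma pd_comm {u : En n → ℝ} (hu : ContDiff ℝ (⊤ : ℕ∞) u) (i j : Fin n) (x : En n) :
    pd i (pd j u) x = pd j (pd i u) x := by
  have hd : ∀ y, HasFDerivAt u (fderiv ℝ u y) y := fun y =>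
    (hu.differentiable (by simp) y).hasFDerivAt
  have h2 : HasFDerivAt (fderiv ℝ u) (fderiv ℝ (fderiv ℝ u) x) x :=
    (((hu.fderiv_right (m := 1) (WithTop.coe_le_coe.mpr le_top)).differentiable (by simp)) x).hasFDerivAt
  rw [pd_eq_snd hu, pd_eq_snd hu]
  exact second_derivative_symmetric hd h2 _ _

lemma pd_add {u v : En n → ℝ} {x : En n} (hu : DifferentiableAt ℝ u x)
    (hv : DifferentiableAt ℝ v x) (i : Fin n) :
    pd i (fun y => u y + v y) x = pd i u x + pd i v x := by
  simp [pd, fderiv_fun_add hu hv]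

lemma pd_sub {u v : En n → ℝ} {x : En n} (hu : DifferentiableAt ℝ u x)
    (hv : DifferentiableAt ℝ v x) (i : Fin n) :
    pd i (fun y => u y - v y) x = pd i u x - pd i v x := by
  simp [pd, fderiv_fun_sub hu hv]

lemma pd_const_mul {u : En n → ℝ} {x : En n} (hu : DifferentiableAt ℝ u x) (c : ℝ) (i : Fin n) :
    pd i (fun y => c * u y) x = c * pd i u x := by
  simp [pd, fderiv_const_mul hu c]

lemma pd_mul {u v : En n → ℝ} {x : En n} (hu : DifferentiableAt ℝ u x)
    (hv : DifferentiableAt ℝ v x) (i : Fin n) :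
    pd i (fun y => u y * v y) x = pd i u x * v x + u x * pd i v x := by
  rw [pd, fderiv_fun_mul hu hv]; simp [pd]; ring

lemma pd_mul_const {u : En n → ℝ} {x : En n} (hu : DifferentiableAt ℝ u x) (c : ℝ) (i : Fin n) :
    pd i (fun y => u y * c) x = pd i u x * c := by
  rw [pd, fderiv_mul_const hu]; simp [pd]; ring

lemma pd_sum {m : ℕ} {x : En n} {u : Fin m → En n → ℝ} (hu : ∀ j, DifferentiableAt ℝ (u j) x)
    (i : Fin n) : pd i (fun y => ∑ j, u j y) x = ∑ j, pd i (u j) x := by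
  rw [pd, fderiv_fun_sum (fun j _ => hu j)]; simp [pd]

lemma pd_const (c : ℝ) (i : Fin n) (x : En n) : pd i (fun _ : En n => c) x = 0 := by
  simp [pd]

lemma contDiff_coord (j : Fin n) : ContDiff ℝ (⊤ : ℕ∞) (fun y : En n => y j) :=
  (EuclideanSpace.proj (𝕜 := ℝ) j).contDiff

lemma contDiff_coordhalf (j : Fin n) : ContDiff ℝ (⊤ : ℕ∞) (fun y : En n => y j / 2) :=
  (contDiff_coord j).div_const 2

lemma pd_coord (i j : Fin n) (x : En n) :
    pd i (fun y : En n => y j) x = if j = i then 1 else 0 := by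
  have he : (fun y : En n => y j) = ⇑(EuclideanSpace.proj (𝕜 := ℝ) j) := rfl
  rw [pd, he, (EuclideanSpace.proj (𝕜 := ℝ) j).fderiv]
  show (EuclideanSpace.single i 1) j = _
  rw [EuclideanSpace.single_apply]

lemma pd_coord_half (i j : Fin n) (x : En n) :
    pd i (fun y : En n => y j / 2) x = (if j = i then 1 else 0) / 2 := by
  have he : (fun y : En n => y j / 2) = fun y : En n => (2:ℝ)⁻¹ * y j := by
    funext y; ring
  rw [he, pd_const_mul (cdiff (contDiff_coord j)), pd_coord]
  by_cases h : j = i <;> simp [h]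

lemma pd_mul_coordhalf {w : En n → ℝ} {x : En n} (hw : ContDiff ℝ (⊤ : ℕ∞) w) (i j : Fin n) :
    pd i (fun y => (y j / 2) * w y) x
      = (if j = i then 1 else 0) / 2 * w x + (x j / 2) * pd i w x := by
  rw [pd_mul (cdiff (contDiff_coordhalf j)) (cdiff hw), pd_coord_half]

lemma pd_mul_coordhalf' {w : En n → ℝ} {x : En n} (hw : ContDiff ℝ (⊤ : ℕ∞) w) (i j : Fin n) :
    pd i (fun y => w y * (y j / 2)) x
      = pd i w x * (x j / 2) + w x * ((if j = i then 1 else 0) / 2) := by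
  rw [pd_mul (cdiff hw) (cdiff (contDiff_coordhalf j)), pd_coord_half]

lemma sum_ite_half (g : Fin n → ℝ) (i : Fin n) :
    ∑ j, (if j = i then (1:ℝ) else 0) / 2 * g j = 1/2 * g i := by
  have h : ∀ j : Fin n, (if j = i then (1:ℝ) else 0) / 2 * g j
      = if j = i then 1/2 * g j else 0 := by
    intro j; split <;> simp
  rw [Finset.sum_congr rfl (fun j _ => h j), Finset.sum_ite_eq' Finset.univ i]
  simp

lemma sum_ite_half' (g : Fin n → ℝ) (i : Fin n) :
    ∑ j, g j * ((if j = i then (1:ℝ) else 0) / 2) = g i * (1/2) := by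
  have h : ∀ j : Fin n, g j * ((if j = i then (1:ℝ) else 0) / 2)
      = (if j = i then (1:ℝ) else 0) / 2 * g j := fun j => by ring
  rw [Finset.sum_congr rfl (fun j _ => h j), sum_ite_half]
  ring

lemma driftLap_eq (w : En n → ℝ) (x : En n) :
    driftLap w x = (∑ j, pd j (pd j w) x) - ∑ j, (x j / 2) * pd j w x := rfl

lemma contDiff_driftLap {w : En n → ℝ} (hw : ContDiff ℝ (⊤ : ℕ∞) w) : ContDiff ℝ (⊤ : ℕ∞) (driftLap w) := by
  have h1 : ContDiff ℝ (⊤ : ℕ∞) (fun y : En n => ∑ j, pd j (pd j w) y) :=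
    ContDiff.sum (fun j _ => pd_contDiff (pd_contDiff hw j) j)
  have h2 : ContDiff ℝ (⊤ : ℕ∞) (fun y : En n => ∑ j, (y j / 2) * pd j w y) :=
    ContDiff.sum (fun j _ => (contDiff_coordhalf j).mul (pd_contDiff hw j))
  exact h1.sub h2

lemma pd_driftLap {w : En n → ℝ} (hw : ContDiff ℝ (⊤ : ℕ∞) w) (i : Fin n) (x : En n) :
    pd i (driftLap w) x = (∑ j, pd i (pd j (pd j w)) x)
      - (1/2 * pd i w x + ∑ j, (x j / 2) * pd i (pd j w) x) := by
  have e : driftLap w = fun y => (∑ j, pd j (pd j w) y) - ∑ j, (y j / 2) * pd j w y := rfl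
  have h1 : ContDiff ℝ (⊤ : ℕ∞) (fun y : En n => ∑ j, pd j (pd j w) y) :=
    ContDiff.sum (fun j _ => pd_contDiff (pd_contDiff hw j) j)
  have h2 : ContDiff ℝ (⊤ : ℕ∞) (fun y : En n => ∑ j, (y j / 2) * pd j w y) :=
    ContDiff.sum (fun j _ => (contDiff_coordhalf j).mul (pd_contDiff hw j))
  rw [e, pd_sub (cdiff h1) (cdiff h2),
    pd_sum (fun j => cdiff (pd_contDiff (pd_contDiff hw j) j)),
    pd_sum (fun j => cdiff ((contDiff_coordhalf j).mul (pd_contDiff hw j)))]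
  congr 1
  rw [Finset.sum_congr rfl (fun j _ => pd_mul_coordhalf (pd_contDiff hw j) i j),
    Finset.sum_add_distrib, sum_ite_half (fun j => pd j w x) i]

lemma Pop_expand {V : En n → Fin n → ℝ} (hV : ∀ k, ContDiff ℝ (⊤ : ℕ∞) (fun y => V y k))
    (x : En n) (i : Fin n) :
    Pop V x i = ∑ j, ((-(1:ℝ)/2) * (pd j (pd i (fun y => V y j)) x
        + pd j (pd j (fun y => V y i)) x)
      + (x j / 2) * ((pd i (fun y => V y j) x + pd j (fun y => V y i) x) / 2)) := by
  rw [Pop, divfT]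
  refine Finset.sum_congr rfl (fun j _ => ?_)
  have e : (fun y => divfStar V y i j)
      = fun y => (-(1:ℝ)/2) * (pd i (fun z => V z j) y + pd j (fun z => V z i) y) := by
    funext y; rw [divfStar]; ring
  rw [e, pd_const_mul (cdiff ((pd_contDiff (hV j) i).add (pd_contDiff (hV i) j))) _ j,
    pd_add (cdiff (pd_contDiff (hV j) i)) (cdiff (pd_contDiff (hV i) j)) j, divfStar]
  ring

lemma pd_divf {V : En n → Fin n → ℝ} (hV : ∀ k, ContDiff ℝ (⊤ : ℕ∞) (fun y => V y k))
    (i : Fin n) (x : En n) :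
    pd i (fun y => divf V y) x
      = ∑ j, (pd i (pd j (fun y => V y j)) x
          - (pd i (fun y => V y j) x * (x j / 2) + V x j * ((if j = i then 1 else 0) / 2))) := by
  have e : (fun y => divf V y)
      = fun y => ∑ j, (pd j (fun z => V z j) y - V y j * (y j / 2)) := rfl
  rw [e, pd_sum (fun j => DifferentiableAt.fun_sub (cdiff (pd_contDiff (hV j) j))
      (cdiff ((hV j).mul (contDiff_coordhalf j))))]
  refine Finset.sum_congr rfl (fun j _ => ?_)
  rw [pd_sub (cdiff (pd_contDiff (hV j) j)) (cdiff ((hV j).mul (contDiff_coordhalf j))),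
    pd_mul_coordhalf' (hV j) i j]

lemma key_sum {m : ℕ} (a b c d : Fin m → Fin m → ℝ) (w t : Fin m → ℝ)
    (hIII : ∀ j, ∑ i, a i j = ∑ i, b i j * t i + d j j)
    (hII : ∀ j, ∑ i, c i j = ∑ i, d i j * t i + w j * (1/2))
    (hI : ∑ j, d j j = ∑ j, w j * t j) :
    ∑ i, ((∑ j, a i j) - (1/2 * d i i + ∑ j, t j * c i j)
      - ((∑ j, b i j) - ∑ j, t j * d i j) * t i) = 0 := by
  have e1 : ∀ i : Fin m, (∑ j, a i j) - (1/2 * d i i + ∑ j, t j * c i j)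
      - ((∑ j, b i j) - ∑ j, t j * d i j) * t i
      = ((∑ j, a i j) + ∑ j, (t j * (d i j * t i)))
        - (1/2 * d i i + ((∑ j, t j * c i j) + ∑ j, (b i j * t i))) := by
    intro i
    rw [sub_mul, Finset.sum_mul, Finset.sum_mul]
    rw [Finset.sum_congr rfl (fun j _ => show t j * d i j * t i = t j * (d i j * t i) by ring)]
    ring
  rw [Finset.sum_congr rfl (fun i _ => e1 i), Finset.sum_sub_distrib,
    Finset.sum_add_distrib, Finset.sum_add_distrib, Finset.sum_add_distrib]
  have hA : ∑ i, ∑ j, a i j = (∑ j, ∑ i, (b i j * t i)) + ∑ j, d j j := by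
    rw [Finset.sum_comm, Finset.sum_congr rfl (fun j _ => hIII j), Finset.sum_add_distrib]
  have hC : ∑ i, ∑ j, t j * c i j
      = (∑ j, ∑ i, (t j * (d i j * t i))) + ∑ j, t j * (w j * (1/2)) := by
    rw [Finset.sum_comm]
    rw [Finset.sum_congr rfl (fun j _ => show (∑ i, t j * c i j)
        = (∑ i, (t j * (d i j * t i))) + t j * (w j * (1/2)) from by
      rw [← Finset.mul_sum, hII j, mul_add, Finset.mul_sum])]
    rw [Finset.sum_add_distrib]
  have hD : ∑ i, ∑ j, (t j * (d i j * t i)) = ∑ j, ∑ i, (t j * (d i j * t i)) :=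
    Finset.sum_comm
  have hB : ∑ i, ∑ j, (b i j * t i) = ∑ j, ∑ i, (b i j * t i) := Finset.sum_comm
  have hhalf : ∑ i, 1/2 * d i i = 1/2 * ∑ i, d i i := by rw [Finset.mul_sum]
  have hW : ∑ j, t j * (w j * (1/2)) = 1/2 * ∑ j, w j * t j := by
    rw [Finset.mul_sum]
    exact Finset.sum_congr rfl (fun j _ => by ring)
  rw [hA, hC, hD, hB, hhalf, hW]
  linarith [hI]

/-- On the Gaussian soliton: `−𝒫(∇u) = ∇(ℒu) + (1/2)∇u` for smooth functions `u`; and for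
smooth vector fields `V` with `div_f V = 0` one has `−2𝒫V = ℒV + (1/2)V`,
`div_f(ℒV) = 0` and `div_f(𝒫V) = 0`. -/
theorem stmt_5 (n : ℕ) :
    (∀ u : En n → ℝ, ContDiff ℝ (⊤ : ℕ∞) u → ∀ (x : En n) (i : Fin n),
      -(Pop (gradV u) x i) = gradV (driftLap u) x i + (1/2) * gradV u x i) ∧
    (∀ V : En n → Fin n → ℝ, ContDiff ℝ (⊤ : ℕ∞) V → (∀ x, divf V x = 0) →
      (∀ (x : En n) (i : Fin n), -2 * Pop V x i = driftLapV V x i + (1/2) * V x i) ∧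
      (∀ x : En n, divf (driftLapV V) x = 0) ∧
      (∀ x : En n, divf (Pop V) x = 0)) := by
  constructor
  · -- Part 1: gradients
    intro u hu x i
    have hVg : ∀ k : Fin n, ContDiff ℝ (⊤ : ℕ∞) (fun y => gradV u y k) := fun k => pd_contDiff hu k
    rw [Pop_expand hVg x i]
    simp only [gradV]
    rw [pd_driftLap hu i x]
    have hterm : ∀ j : Fin n,
        (-(1:ℝ)/2) * (pd j (pd i (pd j u)) x + pd j (pd j (pd i u)) x)
          + (x j / 2) * ((pd i (pd j u) x + pd j (pd i u) x) / 2)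
        = (x j / 2) * pd i (pd j u) x - pd i (pd j (pd j u)) x := by
      intro j
      have s2 : pd j (pd i u) = pd i (pd j u) := funext fun y => pd_comm hu j i y
      have s1 : pd j (pd i (pd j u)) x = pd i (pd j (pd j u)) x :=
        pd_comm (pd_contDiff hu j) j i x
      rw [s2, s1]
      ring
    rw [Finset.sum_congr rfl (fun j _ => hterm j), Finset.sum_sub_distrib]
    ring
  · -- Part 2: divergence-free fields
    intro V hV hdiv
    have hVc : ∀ k : Fin n, ContDiff ℝ (⊤ : ℕ∞) (fun y => V y k) := fun k => contDiff_pi.mp hV k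
    -- identity (I)
    have hI : ∀ x : En n, ∑ j, pd j (fun y => V y j) x = ∑ j, V x j * (x j / 2) := by
      intro x
      have h0 := hdiv x
      rw [divf, Finset.sum_sub_distrib] at h0
      linarith
    -- identity (II)
    have hII : ∀ (i : Fin n) (x : En n),
        ∑ j, pd i (pd j (fun y => V y j)) x
          = (∑ j, pd i (fun y => V y j) x * (x j / 2)) + V x i * (1/2) := by
      intro i x
      have h0 : pd i (fun y => divf V y) x = 0 := by
        rw [funext hdiv]; exact pd_const 0 i x
      rw [pd_divf hVc i x, Finset.sum_sub_distrib, Finset.sum_add_distrib,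
        sum_ite_half' (fun j => V x j) i] at h0
      linarith
    -- identity (III)
    have hIII : ∀ (i : Fin n) (x : En n),
        ∑ j, pd i (pd i (pd j (fun y => V y j))) x
          = ∑ j, pd i (pd i (fun y => V y j)) x * (x j / 2) + pd i (fun y => V y i) x := by
      intro i x
      have hE0 : (fun x : En n => ∑ j, (pd i (pd j (fun y => V y j)) x
          - (pd i (fun y => V y j) x * (x j / 2) + V x j * ((if j = i then 1 else 0) / 2))))
          = fun _ => (0:ℝ) := by
        funext z
        rw [← pd_divf hVc i z, funext hdiv]
        exact pd_const 0 i z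
      have h0 : pd i (fun x : En n => ∑ j, (pd i (pd j (fun y => V y j)) x
          - (pd i (fun y => V y j) x * (x j / 2)
            + V x j * ((if j = i then 1 else 0) / 2)))) x = 0 := by
        rw [hE0]; exact pd_const 0 i x
      have hdsum : ∀ j : Fin n, DifferentiableAt ℝ (fun z : En n =>
          pd i (pd j (fun y => V y j)) z - (pd i (fun y => V y j) z * (z j / 2)
            + V z j * ((if j = i then 1 else 0) / 2))) x := by
        intro j
        exact (cdiff (pd_contDiff (pd_contDiff (hVc j) j) i)).sub
          ((( cdiff (pd_contDiff (hVc j) i)).mul (cdiff (contDiff_coordhalf j))).add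
            (cdiff ((hVc j).mul contDiff_const)))
      rw [pd_sum hdsum i] at h0
      have hexp : ∀ j : Fin n, pd i (fun z : En n =>
          pd i (pd j (fun y => V y j)) z - (pd i (fun y => V y j) z * (z j / 2)
            + V z j * ((if j = i then 1 else 0) / 2))) x
          = pd i (pd i (pd j (fun y => V y j))) x
            - (pd i (pd i (fun y => V y j)) x * (x j / 2)
              + pd i (fun y => V y j) x * ((if j = i then 1 else 0) / 2)
              + pd i (fun y => V y j) x * ((if j = i then 1 else 0) / 2)) := by
        intro j
        rw [pd_sub (cdiff (pd_contDiff (pd_contDiff (hVc j) j) i))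
          (((cdiff (pd_contDiff (hVc j) i)).fun_mul (cdiff (contDiff_coordhalf j))).fun_add
            (cdiff ((hVc j).mul contDiff_const))),
          pd_add ((cdiff (pd_contDiff (hVc j) i)).fun_mul (cdiff (contDiff_coordhalf j)))
            (cdiff ((hVc j).mul contDiff_const)),
          pd_mul_coordhalf' (pd_contDiff (hVc j) i) i j,
          pd_mul_const (cdiff (hVc j)) _ i]
      rw [Finset.sum_congr rfl (fun j _ => hexp j), Finset.sum_sub_distrib,
        Finset.sum_add_distrib, Finset.sum_add_distrib,
        sum_ite_half' (fun j => pd i (fun y => V y j) x) i] at h0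
      linarith
    have pa : ∀ (x : En n) (i : Fin n),
        -2 * Pop V x i = driftLapV V x i + (1/2) * V x i := by
      intro x i
      rw [Pop_expand hVc x i]
      have hterm : ∀ j : Fin n,
          (-(1:ℝ)/2) * (pd j (pd i (fun y => V y j)) x + pd j (pd j (fun y => V y i)) x)
            + (x j / 2) * ((pd i (fun y => V y j) x + pd j (fun y => V y i) x) / 2)
          = ((-(1:ℝ)/2) * pd i (pd j (fun y => V y j)) x
              + (1/2) * (pd i (fun y => V y j) x * (x j / 2)))
            + ((-(1:ℝ)/2) * pd j (pd j (fun y => V y i)) x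
              + (1/2) * ((x j / 2) * pd j (fun y => V y i) x)) := by
        intro j
        rw [pd_comm (hVc j) j i x]
        ring
      rw [Finset.sum_congr rfl (fun j _ => hterm j), Finset.sum_add_distrib,
        Finset.sum_add_distrib, Finset.sum_add_distrib,
        ← Finset.mul_sum, ← Finset.mul_sum, ← Finset.mul_sum, ← Finset.mul_sum]
      have hdl : driftLapV V x i = (∑ j, pd j (pd j (fun y => V y i)) x)
          - ∑ j, (x j / 2) * pd j (fun y => V y i) x := rfl
      rw [hdl]
      have h2 := hII i x
      linarith
    refine ⟨pa, ?_, ?_⟩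
    · -- div_f (ℒ V) = 0
      intro x
      have hi : ∀ i : Fin n,
          pd i (fun y => driftLapV V y i) x - driftLapV V x i * (x i / 2)
          = (∑ j, pd j (pd j (pd i (fun z => V z i))) x)
            - (1/2 * pd i (fun z => V z i) x
              + ∑ j, (x j / 2) * pd j (pd i (fun z => V z i)) x)
            - ((∑ j, pd j (pd j (fun z => V z i)) x)
              - ∑ j, (x j / 2) * pd j (fun z => V z i) x) * (x i / 2) := by
        intro i
        show pd i (driftLap (fun z => V z i)) x - driftLap (fun z => V z i) x * (x i / 2) = _
        rw [pd_driftLap (hVc i) i x, driftLap_eq]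
        have e1 : ∀ j : Fin n, pd i (pd j (pd j (fun z => V z i))) x
            = pd j (pd j (pd i (fun z => V z i))) x := by
          intro j
          have s2 : pd i (pd j (fun z => V z i)) = pd j (pd i (fun z => V z i)) :=
            funext fun y => pd_comm (hVc i) i j y
          rw [pd_comm (pd_contDiff (hVc i) j) i j x, s2]
        have e2 : ∀ j : Fin n, (x j / 2) * pd i (pd j (fun z => V z i)) x
            = (x j / 2) * pd j (pd i (fun z => V z i)) x := by
          intro j
          rw [pd_comm (hVc i) i j x]
        rw [Finset.sum_congr rfl (fun j _ => e1 j), Finset.sum_congr rfl (fun j _ => e2 j)]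
      rw [divf, Finset.sum_congr rfl (fun i _ => hi i)]
      exact key_sum (fun i j => pd j (pd j (pd i (fun z => V z i))) x)
        (fun i j => pd j (pd j (fun z => V z i)) x)
        (fun i j => pd j (pd i (fun z => V z i)) x)
        (fun i j => pd j (fun z => V z i) x)
        (fun j => V x j) (fun j => x j / 2)
        (fun j => hIII j x) (fun j => hII j x) (hI x)
    · -- div_f (𝒫 V) = 0
      intro x
      have hPop : ∀ (y : En n) (k : Fin n),
          Pop V y k = (-(1:ℝ)/2) * driftLapV V y k + (-(1:ℝ)/4) * V y k := by
        intro y k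
        have := pa y k
        linarith
      have hcomp : ∀ k : Fin n, (fun y => Pop V y k)
          = fun y => (-(1:ℝ)/2) * driftLapV V y k + (-(1:ℝ)/4) * V y k :=
        fun k => funext fun y => hPop y k
      have hdLc : ∀ k : Fin n, ContDiff ℝ (⊤ : ℕ∞) (fun y => driftLapV V y k) := fun k =>
        contDiff_driftLap (hVc k)
      have hterm : ∀ k : Fin n,
          pd k (fun y => Pop V y k) x - Pop V x k * (x k / 2)
          = (-(1:ℝ)/2) * (pd k (fun y => driftLapV V y k) x - driftLapV V x k * (x k / 2))
            + (-(1:ℝ)/4) * (pd k (fun y => V y k) x - V x k * (x k / 2)) := by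
        intro k
        rw [hcomp k,
          pd_add (cdiff (contDiff_const.mul (hdLc k))) (cdiff (contDiff_const.mul (hVc k))),
          pd_const_mul (cdiff (hdLc k)), pd_const_mul (cdiff (hVc k)), hPop x k]
        ring
      rw [divf, Finset.sum_congr rfl (fun k _ => hterm k), Finset.sum_add_distrib,
        ← Finset.mul_sum, ← Finset.mul_sum]
      have hb : divf (driftLapV V) x = 0 := by
        have hi : ∀ i : Fin n,
            pd i (fun y => driftLapV V y i) x - driftLapV V x i * (x i / 2)
            = (∑ j, pd j (pd j (pd i (fun z => V z i))) x)
              - (1/2 * pd i (fun z => V z i) x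
                + ∑ j, (x j / 2) * pd j (pd i (fun z => V z i)) x)
              - ((∑ j, pd j (pd j (fun z => V z i)) x)
                - ∑ j, (x j / 2) * pd j (fun z => V z i) x) * (x i / 2) := by
          intro i
          show pd i (driftLap (fun z => V z i)) x - driftLap (fun z => V z i) x * (x i / 2) = _
          rw [pd_driftLap (hVc i) i x, driftLap_eq]
          have e1 : ∀ j : Fin n, pd i (pd j (pd j (fun z => V z i))) x
              = pd j (pd j (pd i (fun z => V z i))) x := by
            intro j
            have s2 : pd i (pd j (fun z => V z i)) = pd j (pd i (fun z => V z i)) :=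
              funext fun y => pd_comm (hVc i) i j y
            rw [pd_comm (pd_contDiff (hVc i) j) i j x, s2]
          have e2 : ∀ j : Fin n, (x j / 2) * pd i (pd j (fun z => V z i)) x
              = (x j / 2) * pd j (pd i (fun z => V z i)) x := by
            intro j
            rw [pd_comm (hVc i) i j x]
          rw [Finset.sum_congr rfl (fun j _ => e1 j), Finset.sum_congr rfl (fun j _ => e2 j)]
        rw [divf, Finset.sum_congr rfl (fun i _ => hi i)]
        exact key_sum (fun i j => pd j (pd j (pd i (fun z => V z i))) x)
          (fun i j => pd j (pd j (fun z => V z i)) x)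
          (fun i j => pd j (pd i (fun z => V z i)) x)
          (fun i j => pd j (fun z => V z i) x)
          (fun j => V x j) (fun j => x j / 2)
          (fun j => hIII j x) (fun j => hII j x) (hI x)
      rw [divf] at hb
      have hd0 := hdiv x
      rw [divf] at hd0
      rw [hb, hd0]
      ring
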